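/- arXiv:1802.01442 — 5 statements merged into one kernel-verified Lean document; each statement's English description precedes it below -/
import Mathlib

section
/- There exists a constant K > 0, depending only on n ≥ 1, with the following property: if D is a nonempty open subset of ℂⁿ, r > 0, and c : D(r) → ℂⁿ is a holomorphic mapping with sup_{z∈D(r)} ‖c(z)‖ ≤ K·r, then the map 𝒞 : D → ℂⁿ, z ↦ z + c(z), is injective. -/
/-!
If `a + c a = b + c b` with `a ≠ b`, then `‖b - a‖ = ‖c a - c b‖ ≤ 2Kr < r`, so `b` lies in the
ball of radius `r` about `a`, on which `c` is holomorphic with values within `2Kr` of `c a`.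
The Schwarz lemma then makes `c` a `2K`-contraction towards `a` on that ball, and for `K = 1/4`
this contradicts `‖c b - c a‖ = ‖b - a‖`.
-/

open Set Metric

/-- The open `r`-neighborhood of a set `M ⊆ ℂⁿ`. -/
def nbhd {n : ℕ} (M : Set (EuclideanSpace ℂ (Fin n))) (r : ℝ) :
    Set (EuclideanSpace ℂ (Fin n)) :=
  {z | ∃ x ∈ M, ‖x - z‖ < r}

theorem ball_subset_nbhd {n : ℕ} {M : Set (EuclideanSpace ℂ (Fin n))}
    {x : EuclideanSpace ℂ (Fin n)} (hx : x ∈ M) (r : ℝ) : ball x r ⊆ nbhd M r :=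
  fun z hz => ⟨x, hx, by rwa [← dist_eq_norm, dist_comm]⟩

theorem Complex.dist_le_mul_dist_of_norm_le_of_differentiableOn_ball
    {E F : Type*} [NormedAddCommGroup E] [NormedSpace ℂ E] [NormedAddCommGroup F]
    [NormedSpace ℂ F] {f : E → F} {a z : E} {R M : ℝ} (hd : DifferentiableOn ℂ f (ball a R))
    (hM : ∀ w ∈ ball a R, ‖f w‖ ≤ M) (hz : z ∈ ball a R) :
    dist (f z) (f a) ≤ 2 * M / R * dist z a := by
  have ha : a ∈ ball a R := mem_ball_self (nonempty_ball.1 ⟨z, hz⟩)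
  refine Complex.dist_le_div_mul_dist_of_mapsTo_ball hd (fun w hw => ?_) hz
  exact mem_closedBall.2 <| (dist_le_norm_add_norm _ _).trans (by linarith [hM w hw, hM a ha])

theorem dist_eq_dist_of_add_eq_add {E : Type*} [NormedAddCommGroup E] {c : E → E} {a b : E}
    (h : a + c a = b + c b) : dist (c b) (c a) = dist b a := by
  rw [dist_eq_norm, dist_eq_norm, ← norm_neg, eq_sub_of_add_eq' h.symm]
  congr 1
  abel

theorem injective_perturbation_general (n : ℕ) :
    ∃ K : ℝ, 0 < K ∧
      ∀ (D : Set (EuclideanSpace ℂ (Fin n))) (r : ℝ)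
        (c : EuclideanSpace ℂ (Fin n) → EuclideanSpace ℂ (Fin n)),
        D.Nonempty → IsOpen D → 0 < r →
        DifferentiableOn ℂ c (nbhd D r) →
        (∀ z ∈ nbhd D r, ‖c z‖ ≤ K * r) →
        Set.InjOn (fun z => z + c z) D := by
  refine ⟨1 / 4, by norm_num, fun D r c _ _ hr hc hbound a ha b hb hab => ?_⟩
  have hdist := dist_eq_dist_of_add_eq_add hab
  have hball := ball_subset_nbhd ha r
  have hb_mem : b ∈ ball a r := by
    rw [mem_ball, ← hdist]
    linarith [dist_le_norm_add_norm (c b) (c a), hbound a (hball (mem_ball_self hr)),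
      hbound b ⟨b, hb, by simpa using hr⟩]
  have hschwarz := Complex.dist_le_mul_dist_of_norm_le_of_differentiableOn_ball
    (hc.mono hball) (fun w hw => hbound w (hball hw)) hb_mem
  rw [hdist, show 2 * (1 / 4 * r) / r = 1 / 2 by field_simp; norm_num] at hschwarz
  exact (dist_le_zero.1 (by linarith [dist_nonneg (x := b) (y := a)])).symm

/-- There is a constant `K > 0` depending only on `n` such that any holomorphic
perturbation of the identity by `c` with `‖c‖ ≤ K·r` on the `r`-neighborhood of `D`
is injective on `D`. -/
theorem injective_perturbation (n : ℕ) (hn : 1 ≤ n) :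
    ∃ K : ℝ, 0 < K ∧
      ∀ (D : Set (EuclideanSpace ℂ (Fin n))) (r : ℝ)
        (c : EuclideanSpace ℂ (Fin n) → EuclideanSpace ℂ (Fin n)),
        D.Nonempty → IsOpen D → 0 < r →
        DifferentiableOn ℂ c (nbhd D r) →
        (∀ z ∈ nbhd D r, ‖c z‖ ≤ K * r) →
        Set.InjOn (fun z => z + c z) D :=
  injective_perturbation_general n
end

section
/- Fix n ≥ 1 and suppose constₙ is a constant such that the Cauchy-estimate Lipschitz bound holds: for every nonempty open V ⊆ ℂⁿ, d > 0, bounded holomorphic F : V → ℂⁿ, and x, y ∈ V with the d-neighborhood of the segment [x,y] contained in V, ‖F(y) − F(x)‖ ≤ constₙ·(‖F‖_V/d)·‖y − x‖. Then: if V is a nonempty open subset of ℂⁿ, 0 < ε < δ/4, and α, β, γ : V(δ) → ℂⁿ are injective holomorphic maps each within distance ε of the identity in sup norm on V(δ), then the composition γ̃ := β⁻¹ ∘ γ ∘ α is well defined on V and, writing α = Id + a, β = Id + b, γ = Id + c, γ̃ = Id + c̃, one has ‖c̃ − (c + a − b)‖_V ≤ M₂·ε²/δ for a constant M₂ ≥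 1 depending only on n. -/
/-!
Write `β = id + b` and `γ = id + c`. Applying the Schwarz lemma to the odd part of a bounded
holomorphic map gives the sharp Cauchy estimate `‖Df(x)‖ ≤ sup ‖f‖ / r`, so on the `3ε`-ball
around a point `z ∈ V` the map `b` is Lipschitz with constant `ε / (δ - 3ε) < 1`; this is exactly
where `ε < δ / 4` enters. The contraction principle then solves `β u = γ (α z)` near `z`, and
since `β` is open near each point with invertible derivative, `β⁻¹` is holomorphic there.
Finally `β (γ̃ z) = γ (α z)` turns the defect `c̃ - (c + a - b)` at `z` into
`(c (α z) - c z) - (b (γ̃ z) - b z)`, and the mean value inequality bounds each of the two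
differences by `ε / (δ - 3ε)` times a distance of order `ε`.
-/

open Set Metric

open Filter Function Topology
open scoped NNReal

theorem nbhd_eq_thickening {n : ℕ} (M : Set (EuclideanSpace ℂ (Fin n))) (r : ℝ) :
    nbhd M r = thickening r M := by
  ext z
  simp [nbhd, mem_thickening_iff, dist_eq_norm, norm_sub_rev z]

theorem exists_add_eq_of_lipschitzOnWith {E : Type*} [NormedAddCommGroup E] [CompleteSpace E]
    {b : E → E} {w : E} {r : ℝ} {K : ℝ≥0} (hr : 0 ≤ r) (hK : K < 1)
    (hb : LipschitzOnWith K b (closedBall w r)) (hbr : ∀ x ∈ closedBall w r, ‖b x‖ ≤ r) :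
    ∃ u ∈ closedBall w r, u + b u = w := by
  have hmaps : MapsTo (fun u => w - b u) (closedBall w r) (closedBall w r) := fun u hu => by
    simpa [dist_eq_norm] using hbr u hu
  have hcontr : ContractingWith K (hmaps.restrict _ _ _) :=
    ⟨hK, fun x y => (edist_sub_left w _ _).trans_le (hb.to_restrict x y)⟩
  obtain ⟨u, hu, hfix, -⟩ := hcontr.exists_fixedPoint' isClosed_closedBall.isComplete hmaps
    (mem_closedBall_self hr) (edist_ne_top _ _)
  exact ⟨u, hu, by rw [← eq_sub_iff_add_eq.1 hfix.eq.symm]⟩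

theorem hasFDerivAt_invFunOn {𝕜 E F : Type*} [NontriviallyNormedField 𝕜]
    [NormedAddCommGroup E] [NormedSpace 𝕜 E] [NormedAddCommGroup F] [NormedSpace 𝕜 F]
    {f : E → F} {f' : E ≃L[𝕜] F} {s : Set E} {a : E} (hf : HasFDerivAt f (f' : E →L[𝕜] F) a)
    (hs : s ∈ 𝓝 a) (hinj : InjOn f s) (hmap : map f (𝓝 a) = 𝓝 (f a)) :
    HasFDerivAt (invFunOn f s) (f'.symm : F →L[𝕜] E) (f a) := by
  have hleft : invFunOn f s ∘ f =ᶠ[𝓝 a] id :=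
    eventually_of_mem hs fun x hx => hinj.leftInvOn_invFunOn hx
  have ha : invFunOn f s (f a) = a := hinj.leftInvOn_invFunOn (mem_of_mem_nhds hs)
  have hcont : ContinuousAt (invFunOn f s) (f a) := by
    rw [ContinuousAt, ha, ← hmap, tendsto_map'_iff]
    exact tendsto_id.congr' hleft.symm
  have hright : ∀ᶠ y in 𝓝 (f a), f (invFunOn f s y) = y := by
    rw [← hmap]
    exact eventually_map.2 (eventually_of_mem hs fun x hx => invFunOn_eq ⟨x, hx, rfl⟩)
  exact HasFDerivAt.of_local_left_inverse hcont (ha.symm ▸ hf) hright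

theorem exists_hasFDerivAt_equiv_of_norm_fderiv_sub_id_lt_one {𝕜 E : Type*}
    [NontriviallyNormedField 𝕜] [NormedAddCommGroup E] [NormedSpace 𝕜 E] [CompleteSpace E]
    {β : E → E} {u : E} (hb : DifferentiableAt 𝕜 (fun x => β x - x) u)
    (h : ‖fderiv 𝕜 (fun x => β x - x) u‖ < 1) :
    ∃ e : E ≃L[𝕜] E, HasFDerivAt β (e : E →L[𝕜] E) u := by
  refine ⟨.unitsEquiv 𝕜 E (.oneSub (-fderiv 𝕜 (fun x => β x - x) u) (by rwa [norm_neg])), ?_⟩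
  have hβ : HasFDerivAt (fun x => x + (β x - x))
      (ContinuousLinearMap.id 𝕜 E + fderiv 𝕜 (fun x => β x - x) u) u :=
    (hasFDerivAt_id u).add hb.hasFDerivAt
  simp only [add_sub_cancel] at hβ
  convert hβ using 1
  ext v
  simp [Units.val_oneSub]

section Holomorphic

variable {E F : Type*} [NormedAddCommGroup E] [NormedSpace ℂ E]
  [NormedAddCommGroup F] [NormedSpace ℂ F] {f : E → F} {x z : E} {r R ρ s : ℝ}

/- The odd part `v ↦ (f (x + v) - f (x - v)) / 2` vanishes at `0`, is bounded by `s` and has the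
same derivative as `f` at `x`, so the Schwarz lemma gives the sharp bound `s / r`. -/
theorem norm_fderiv_le_of_forall_norm_le (hr : 0 < r) (hf : DifferentiableOn ℂ f (ball x r))
    (hs : ∀ y ∈ ball x r, ‖f y‖ ≤ s) : ‖fderiv ℂ f x‖ ≤ s / r := by
  have hplus : MapsTo (fun v : E => x + v) (ball 0 r) (ball x r) := fun v hv => by
    simpa using hv
  have hminus : MapsTo (fun v : E => x - v) (ball 0 r) (ball x r) := fun v hv => by
    simpa [dist_eq_norm] using hv
  set ψ : E → F := fun v => (2 : ℂ)⁻¹ • (f (x + v) - f (x - v))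
  have hψ : DifferentiableOn ℂ ψ (ball 0 r) :=
    ((hf.comp (differentiableOn_id.const_add x) hplus).sub
      (hf.comp (differentiableOn_id.const_sub x) hminus)).const_smul _
  have hmaps : MapsTo ψ (ball 0 r) (closedBall (ψ 0) s) := fun v hv => by
    rw [mem_closedBall_iff_norm]
    calc ‖ψ v - ψ 0‖ = 2⁻¹ * ‖f (x + v) - f (x - v)‖ := by simp [ψ, norm_smul]
      _ ≤ 2⁻¹ * (s + s) := by
          gcongr
          exact (norm_sub_le _ _).trans (add_le_add (hs _ (hplus hv)) (hs _ (hminus hv)))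
      _ = s := by ring
  have hD : HasFDerivAt f (fderiv ℂ f x) x :=
    (hf.differentiableAt (isOpen_ball.mem_nhds (mem_ball_self hr))).hasFDerivAt
  have hψD : HasFDerivAt ψ (fderiv ℂ f x) 0 := by
    have hD' : HasFDerivAt f (fderiv ℂ f x) (x + 0) := by simpa using hD
    have hD'' : HasFDerivAt f (fderiv ℂ f x) (x - 0) := by simpa using hD
    have h := ((hD'.comp (0 : E) ((hasFDerivAt_id (0 : E)).const_add x)).sub
      (hD''.comp (0 : E) ((hasFDerivAt_id (0 : E)).const_sub x))).const_smul (2 : ℂ)⁻¹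
    refine h.congr_fderiv ?_
    ext v
    simp [← two_smul ℂ, smul_smul]
  simpa [hψD.fderiv] using Complex.norm_fderiv_le_div_of_mapsTo_ball hψ hmaps hr

theorem norm_sub_le_of_forall_norm_le (hρR : ρ < R) (hf : DifferentiableOn ℂ f (ball z R))
    (hs : ∀ y ∈ ball z R, ‖f y‖ ≤ s) {x y : E} (hx : x ∈ closedBall z ρ)
    (hy : y ∈ closedBall z ρ) : ‖f y - f x‖ ≤ s / (R - ρ) * ‖y - x‖ := by
  have hball : ∀ w ∈ closedBall z ρ, ball w (R - ρ) ⊆ ball z R := fun w hw =>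
    ball_subset_ball' (by linarith [mem_closedBall.1 hw])
  refine (convex_closedBall z ρ).norm_image_sub_le_of_norm_fderiv_le (𝕜 := ℂ)
    (fun w hw => ?_) (fun w hw => ?_) hx hy
  · exact hf.differentiableAt (isOpen_ball.mem_nhds (hball w hw (mem_ball_self (by linarith))))
  · exact norm_fderiv_le_of_forall_norm_le (by linarith) (hf.mono (hball w hw))
      fun y hy => hs y (hball w hw hy)

end Holomorphic

section NearIdentity

variable {E : Type*} [NormedAddCommGroup E] [NormedSpace ℂ E] {β : E → E} {z : E} {R ε : ℝ}

theorem closedBall_subset_image_ball_of_norm_sub_le [CompleteSpace E]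
    (hβ : DifferentiableOn ℂ β (ball z R)) (hβε : ∀ u ∈ ball z R, ‖β u - u‖ ≤ ε) (hε : 0 ≤ ε)
    {ρ : ℝ} (hρ : ρ + 2 * ε < R) : closedBall z ρ ⊆ β '' ball z R := by
  intro w hw
  have hsub : closedBall w ε ⊆ closedBall z (ρ + ε) :=
    closedBall_subset_closedBall' (by linarith [mem_closedBall.1 hw])
  have hR : closedBall z (ρ + ε) ⊆ ball z R := closedBall_subset_ball (by linarith)
  have hb : DifferentiableOn ℂ (fun u => β u - u) (ball z R) := hβ.sub differentiableOn_id
  have hlip : LipschitzOnWith (ε / (R - (ρ + ε))).toNNReal (fun u => β u - u) (closedBall w ε) :=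
    LipschitzOnWith.of_dist_le_mul fun x hx y hy => by
      simpa only [dist_eq_norm, sub_sub_sub_comm] using
        (norm_sub_le_of_forall_norm_le (by linarith) hb hβε (hsub hy) (hsub hx)).trans
          (by gcongr; exact Real.le_coe_toNNReal _)
  obtain ⟨u, hu, hβu⟩ := exists_add_eq_of_lipschitzOnWith hε
    (Real.toNNReal_lt_one.2 ((div_lt_one (by linarith)).2 (by linarith))) hlip
    fun x hx => hβε x (hR (hsub hx))
  exact ⟨u, hR (hsub hu), by rwa [add_sub_cancel] at hβu⟩

/- On a small ball around `z`, `β - id` is Lipschitz with constant `< 1`, so `β` maps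
neighbourhoods of `z` onto neighbourhoods of `β z`; the Cauchy estimate at `z` makes `fderiv ℂ β z`
invertible. -/
theorem differentiableAt_invFunOn_of_norm_sub_le [CompleteSpace E] {Ω : Set E} (hΩ : Ω ∈ 𝓝 z)
    (hinj : InjOn β Ω) (hβ : DifferentiableOn ℂ β (ball z R))
    (hβε : ∀ u ∈ ball z R, ‖β u - u‖ ≤ ε) (hε : 0 ≤ ε) (hεR : ε < R) :
    DifferentiableAt ℂ (invFunOn β Ω) (β z) := by
  have hR : 0 < R := hε.trans_lt hεR
  have hb : DifferentiableOn ℂ (fun u => β u - u) (ball z R) := hβ.sub differentiableOn_id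
  obtain ⟨e, he⟩ := exists_hasFDerivAt_equiv_of_norm_fderiv_sub_id_lt_one
    (hb.differentiableAt (isOpen_ball.mem_nhds (mem_ball_self hR)))
    ((norm_fderiv_le_of_forall_norm_le hR hb hβε).trans_lt ((div_lt_one hR).2 hεR))
  have happrox : ApproximatesLinearOn β (ContinuousLinearMap.id ℂ E) (ball z ((R - ε) / 2))
      (ε / (R - (R - ε) / 2)).toNNReal := fun x hx y hy => by
    simpa only [ContinuousLinearMap.id_apply, sub_sub_sub_comm] using
      (norm_sub_le_of_forall_norm_le (by linarith) hb hβε (ball_subset_closedBall hy)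
        (ball_subset_closedBall hx)).trans (by gcongr; exact Real.le_coe_toNNReal _)
  have hmap := happrox.map_nhds_eq ⟨id, 1, fun y => by simp, fun y => rfl⟩
    (ball_mem_nhds z (by linarith)) (Or.inr (by
      rw [inv_one]; exact Real.toNNReal_lt_one.2 ((div_lt_one (by linarith)).2 (by linarith))))
  exact (hasFDerivAt_invFunOn he hΩ hinj hmap).differentiableAt

theorem norm_composition_defect_le {γ : E → E} (hβ : DifferentiableOn ℂ β (ball z R))
    (hβε : ∀ u ∈ ball z R, ‖β u - u‖ ≤ ε) (hγ : DifferentiableOn ℂ γ (ball z R))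
    (hγε : ∀ u ∈ ball z R, ‖γ u - u‖ ≤ ε) (hεR : 4 * ε < R) {p u : E} (hp : ‖p - z‖ ≤ ε)
    (hu : ‖u - z‖ ≤ 3 * ε) (hβu : β u = γ p) :
    ‖(u - z) - ((γ z - z) + (p - z) - (β z - z))‖ ≤ 14 * ε ^ 2 / R := by
  have hε : 0 ≤ ε := (norm_nonneg _).trans hp
  have hR : 0 < R := by linarith
  have hc : ‖(γ p - p) - (γ z - z)‖ ≤ ε / (R - ε) * ‖p - z‖ :=
    norm_sub_le_of_forall_norm_le (by linarith) (hγ.sub differentiableOn_id) hγε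
      (mem_closedBall_self hε) (mem_closedBall_iff_norm.2 hp)
  have hb : ‖(β u - u) - (β z - z)‖ ≤ ε / (R - 3 * ε) * ‖u - z‖ :=
    norm_sub_le_of_forall_norm_le (by linarith) (hβ.sub differentiableOn_id) hβε
      (mem_closedBall_self (by linarith)) (mem_closedBall_iff_norm.2 hu)
  have h1 : ε / (R - ε) * ε ≤ 2 * ε ^ 2 / R := by
    rw [div_mul_eq_mul_div, div_le_div_iff₀ (by linarith) hR]; nlinarith
  have h2 : ε / (R - 3 * ε) * (3 * ε) ≤ 12 * ε ^ 2 / R := by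
    rw [div_mul_eq_mul_div, div_le_div_iff₀ (by linarith) hR]; nlinarith
  calc ‖(u - z) - ((γ z - z) + (p - z) - (β z - z))‖
      = ‖((γ p - p) - (γ z - z)) - ((β u - u) - (β z - z))‖ := by rw [hβu]; congr 1; abel
    _ ≤ ‖(γ p - p) - (γ z - z)‖ + ‖(β u - u) - (β z - z)‖ := norm_sub_le _ _
    _ ≤ ε / (R - ε) * ε + ε / (R - 3 * ε) * (3 * ε) := by
        gcongr
        · exact hc.trans (mul_le_mul_of_nonneg_left hp (div_nonneg hε (by linarith)))
        · exact hb.trans (mul_le_mul_of_nonneg_left hu (div_nonneg hε (by linarith)))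
    _ ≤ 14 * ε ^ 2 / R := by linarith [show 14 * ε ^ 2 / R = 2 * ε ^ 2 / R + 12 * ε ^ 2 / R by ring]

theorem exists_near_identity_composition [CompleteSpace E] {V : Set E} {δ : ℝ} {α γ : E → E}
    (hε : 0 ≤ ε) (hεδ : 4 * ε < δ)
    (hαi : InjOn α (thickening δ V)) (hαd : DifferentiableOn ℂ α (thickening δ V))
    (hβi : InjOn β (thickening δ V)) (hβd : DifferentiableOn ℂ β (thickening δ V))
    (hγi : InjOn γ (thickening δ V)) (hγd : DifferentiableOn ℂ γ (thickening δ V))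
    (hαε : ∀ z ∈ thickening δ V, ‖α z - z‖ ≤ ε) (hβε : ∀ z ∈ thickening δ V, ‖β z - z‖ ≤ ε)
    (hγε : ∀ z ∈ thickening δ V, ‖γ z - z‖ ≤ ε) :
    ∃ γt : E → E,
      (∀ z ∈ V, α z ∈ thickening δ V ∧ γt z ∈ thickening δ V ∧ β (γt z) = γ (α z)) ∧
      InjOn γt V ∧ DifferentiableOn ℂ γt V ∧
      ∀ z ∈ V, ‖(γt z - z) - ((γ z - z) + (α z - z) - (β z - z))‖ ≤ 14 * ε ^ 2 / δ := by
  set Ω := thickening δ V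
  have hδ : 0 < δ := by linarith
  have hΩ : ∀ {x}, x ∈ Ω → Ω ∈ 𝓝 x := fun hx => isOpen_thickening.mem_nhds hx
  have hball : ∀ z ∈ V, ball z δ ⊆ Ω := fun z hz => ball_subset_thickening hz δ
  have hzΩ : ∀ z ∈ V, z ∈ Ω := fun z hz => hball z hz (mem_ball_self hδ)
  have hαz : ∀ z ∈ V, ‖α z - z‖ ≤ ε := fun z hz => hαε z (hzΩ z hz)
  have hαΩ : ∀ z ∈ V, α z ∈ Ω := fun z hz =>
    hball z hz (mem_ball_iff_norm.2 ((hαz z hz).trans_lt (by linarith)))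
  have hγαz : ∀ z ∈ V, ‖γ (α z) - z‖ ≤ 2 * ε := fun z hz =>
    (norm_sub_le_norm_sub_add_norm_sub _ (α z) _).trans (by linarith [hγε _ (hαΩ z hz), hαz z hz])
  have hpre : ∀ z ∈ V, ∃ u ∈ Ω, β u = γ (α z) := fun z hz =>
    image_mono (hball z hz) (closedBall_subset_image_ball_of_norm_sub_le (hβd.mono (hball z hz))
      (fun u hu => hβε u (hball z hz hu)) hε (by linarith) (mem_closedBall_iff_norm.2 (hγαz z hz)))
  set γt := fun z => invFunOn β Ω (γ (α z))
  have hγt : ∀ z ∈ V, γt z ∈ Ω ∧ β (γt z) = γ (α z) := fun z hz => invFunOn_pos (hpre z hz)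
  have hγtz : ∀ z ∈ V, ‖γt z - z‖ ≤ 3 * ε := fun z hz => by
    have hβγt := hβε _ (hγt z hz).1
    rw [(hγt z hz).2, norm_sub_rev] at hβγt
    linarith [norm_sub_le_norm_sub_add_norm_sub (γt z) (γ (α z)) z, hγαz z hz]
  refine ⟨γt, fun z hz => ⟨hαΩ z hz, hγt z hz⟩, fun z hz z' hz' h => ?_, fun z hz => ?_,
    fun z hz => norm_composition_defect_le (hβd.mono (hball z hz))
      (fun u hu => hβε u (hball z hz hu)) (hγd.mono (hball z hz))
      (fun u hu => hγε u (hball z hz hu)) hεδ (hαz z hz) (hγtz z hz) (hγt z hz).2⟩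
  · refine hαi (hzΩ z hz) (hzΩ z' hz') (hγi (hαΩ z hz) (hαΩ z' hz') ?_)
    rw [← (hγt z hz).2, ← (hγt z' hz').2]
    exact congrArg β h
  · have hsub : ball (γt z) (δ - 3 * ε) ⊆ Ω := (ball_subset_ball' (by
      rw [dist_eq_norm]; linarith [hγtz z hz])).trans (hball z hz)
    have hinv := differentiableAt_invFunOn_of_norm_sub_le (hΩ (hγt z hz).1) hβi (hβd.mono hsub)
      (fun u hu => hβε u (hsub hu)) hε (by linarith)
    rw [(hγt z hz).2] at hinv
    exact (hinv.comp z ((hγd.differentiableAt (hΩ (hαΩ z hz))).comp z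
      (hαd.differentiableAt (hΩ (hzΩ z hz))))).differentiableWithinAt

end NearIdentity

theorem near_identity_composition_general (n : ℕ) :
    ∃ M₂ : ℝ, 1 ≤ M₂ ∧
      ∀ (V : Set (EuclideanSpace ℂ (Fin n))) (ε δ : ℝ)
        (α β γ : EuclideanSpace ℂ (Fin n) → EuclideanSpace ℂ (Fin n)),
        V.Nonempty → IsOpen V → 0 < ε → ε < δ / 4 →
        Set.InjOn α (nbhd V δ) → DifferentiableOn ℂ α (nbhd V δ) →
        Set.InjOn β (nbhd V δ) → DifferentiableOn ℂ β (nbhd V δ) →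
        Set.InjOn γ (nbhd V δ) → DifferentiableOn ℂ γ (nbhd V δ) →
        (∀ z ∈ nbhd V δ, ‖α z - z‖ < ε) →
        (∀ z ∈ nbhd V δ, ‖β z - z‖ < ε) →
        (∀ z ∈ nbhd V δ, ‖γ z - z‖ < ε) →
        ∃ γt : EuclideanSpace ℂ (Fin n) → EuclideanSpace ℂ (Fin n),
          (∀ z ∈ V, α z ∈ nbhd V δ ∧ γt z ∈ nbhd V δ ∧ β (γt z) = γ (α z)) ∧
          Set.InjOn γt V ∧ DifferentiableOn ℂ γt V ∧
          ∀ z ∈ V, ‖(γt z - z) - ((γ z - z) + (α z - z) - (β z - z))‖ ≤ M₂ * ε ^ 2 / δ := by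
  refine ⟨14, by norm_num, fun V ε δ α β γ _ _ hε hεδ hαi hαd hβi hβd hγi hγd hαε hβε hγε => ?_⟩
  simp only [nbhd_eq_thickening] at *
  exact exists_near_identity_composition hε.le (by linarith) hαi hαd hβi hβd hγi hγd
    (fun z hz => (hαε z hz).le) (fun z hz => (hβε z hz).le) (fun z hz => (hγε z hz).le)

/-- Near-identity composition lemma: given the Cauchy-estimate Lipschitz bound with
constant `constₙ`, there is `M₂ ≥ 1` (depending only on `n`) such that for injective
holomorphic `α, β, γ` on `V(δ)` within `ε < δ/4` of the identity, the composition
`γ̃ = β⁻¹ ∘ γ ∘ α` is well defined on `V` and, writing `α = Id + a`, `β = Id + b`,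
`γ = Id + c`, `γ̃ = Id + c̃`, one has `‖c̃ - (c + a - b)‖_V ≤ M₂ ε²/δ`. -/
theorem near_identity_composition (n : ℕ) (hn : 1 ≤ n) (constn : ℝ) (hconst : 0 < constn)
    (hCauchy : ∀ (V : Set (EuclideanSpace ℂ (Fin n))) (d : ℝ)
      (F : EuclideanSpace ℂ (Fin n) → EuclideanSpace ℂ (Fin n))
      (x y : EuclideanSpace ℂ (Fin n)),
      V.Nonempty → IsOpen V → 0 < d → x ∈ V → y ∈ V →
      DifferentiableOn ℂ F V → BddAbove ((fun z => ‖F z‖) '' V) →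
      nbhd (segment ℝ x y) d ⊆ V →
      ‖F y - F x‖ ≤ constn * (sSup ((fun z => ‖F z‖) '' V) / d) * ‖y - x‖) :
    ∃ M₂ : ℝ, 1 ≤ M₂ ∧
      ∀ (V : Set (EuclideanSpace ℂ (Fin n))) (ε δ : ℝ)
        (α β γ : EuclideanSpace ℂ (Fin n) → EuclideanSpace ℂ (Fin n)),
        V.Nonempty → IsOpen V → 0 < ε → ε < δ / 4 →
        Set.InjOn α (nbhd V δ) → DifferentiableOn ℂ α (nbhd V δ) →
        Set.InjOn β (nbhd V δ) → DifferentiableOn ℂ β (nbhd V δ) →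
        Set.InjOn γ (nbhd V δ) → DifferentiableOn ℂ γ (nbhd V δ) →
        (∀ z ∈ nbhd V δ, ‖α z - z‖ < ε) →
        (∀ z ∈ nbhd V δ, ‖β z - z‖ < ε) →
        (∀ z ∈ nbhd V δ, ‖γ z - z‖ < ε) →
        ∃ γt : EuclideanSpace ℂ (Fin n) → EuclideanSpace ℂ (Fin n),
          (∀ z ∈ V, α z ∈ nbhd V δ ∧ γt z ∈ nbhd V δ ∧ β (γt z) = γ (α z)) ∧
          Set.InjOn γt V ∧ DifferentiableOn ℂ γt V ∧
          ∀ z ∈ V, ‖(γt z - z) - ((γ z - z) + (α z - z) - (β z - z))‖ ≤ M₂ * ε ^ 2 / δ :=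
  near_identity_composition_general n
end

section
/- Under the hypotheses of the near-identity composition lemma (V nonempty open in ℂⁿ, 0 < ε < δ/4, α, β, γ : V(δ) → ℂⁿ injective holomorphic with sup-distance to the identity less than ε on V(δ)), write α = Id + a, β = Id + b, γ = Id + c on V(δ) and γ̃ = β⁻¹∘γ∘α = Id + c̃ on V. If additionally c = b − a on V, then ‖c̃‖_V ≤ M₂·ε²/δ, where M₂ ≥ 1 depends only on n. -/
open Set Metric

/-!
By Cauchy's estimates, the displacement `b = β - id` of a map that is `ε`-close to the identity
on `V(δ)` is `ε / (δ - ρ)`-Lipschitz on the closed `ρ`-ball around any `z ∈ V`. For `ρ = 3ε`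
this constant is `< 1` (as `4ε < δ`) and at most `4ε / δ`. The first fact lets Banach's fixed
point theorem solve `β w = γ (α z)` with `‖w - z‖ ≤ 3ε`, and an implicit-function argument
shows that the solution `w = γ̃ z` depends holomorphically on `z`. The splitting `c = b - a`
turns `w + b w = α z + c (α z)` into `w - z = (c (α z) - c z) - (b w - b z)`, whose norm is at
most `(4ε / δ) (‖α z - z‖ + ‖w - z‖) ≤ 16 ε² / δ`.
-/

open Filter Topology
open scoped NNReal

section PerturbationOfIdentity

variable {𝕜 E : Type*} [NontriviallyNormedField 𝕜] [NormedAddCommGroup E] [NormedSpace 𝕜 E]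
  {f : E → E} {s : Set E} {c : ℝ≥0}

theorem ApproximatesLinearOn.one_sub_mul_norm_sub_le
    (hf : ApproximatesLinearOn f (ContinuousLinearMap.id 𝕜 E) s c) {x y : E} (hx : x ∈ s)
    (hy : y ∈ s) : (1 - c) * ‖x - y‖ ≤ ‖f x - f y‖ := by
  have hxy := hf x hx y hy
  have htri := norm_sub_le (f x - f y) (f x - f y - (x - y))
  rw [ContinuousLinearMap.id_apply] at hxy
  rw [sub_sub_cancel] at htri
  rw [sub_mul, one_mul]
  linarith

theorem ApproximatesLinearOn.exists_mem_closedBall_eq [CompleteSpace E] {z y : E} {R : ℝ}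
    (hf : ApproximatesLinearOn f (ContinuousLinearMap.id 𝕜 E) (closedBall z R) c) (hc : c < 1)
    (hR : 0 ≤ R) (hy : ∀ x ∈ closedBall z R, ‖y - z‖ + ‖f x - x‖ ≤ R) :
    ∃ w ∈ closedBall z R, f w = y := by
  set T : E → E := fun x => y - (f x - x)
  have hT : MapsTo T (closedBall z R) (closedBall z R) := fun x hx => by
    rw [mem_closedBall, dist_eq_norm]
    calc ‖y - (f x - x) - z‖ = ‖(y - z) - (f x - x)‖ := by abel_nf
      _ ≤ R := (norm_sub_le _ _).trans (hy x hx)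
  have hTlip : LipschitzOnWith c T (closedBall z R) :=
    LipschitzOnWith.of_dist_le_mul fun x hx x' hx' => by
      have hxx' := hf x' hx' x hx
      rw [ContinuousLinearMap.id_apply] at hxx'
      calc dist (T x) (T x') = ‖f x' - f x - (x' - x)‖ := by
            rw [dist_eq_norm]; congr 1; simp only [T]; abel
        _ ≤ c * dist x x' := by rwa [dist_comm, dist_eq_norm]
  obtain ⟨w, hw, hfix, -⟩ := ContractingWith.exists_fixedPoint'
    isClosed_closedBall.isComplete hT ⟨hc, hTlip.to_restrict⟩ (mem_closedBall_self hR)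
    (edist_ne_top _ _)
  have hfix : y - (f w - w) = w := hfix
  exact ⟨w, hw, ((sub_eq_iff_eq_add.1 hfix).trans (add_sub_cancel w (f w))).symm⟩

theorem ApproximatesLinearOn.continuousAt_of_comp_eq {X : Type*} [TopologicalSpace X]
    {g h : X → E} {a : X} (hf : ApproximatesLinearOn f (ContinuousLinearMap.id 𝕜 E) s c)
    (hc : c < 1) (hgs : ∀ᶠ x in 𝓝 a, g x ∈ s) (hfg : ∀ᶠ x in 𝓝 a, f (g x) = h x)
    (hh : ContinuousAt h a) : ContinuousAt g a := by
  have hc' : (0 : ℝ) < 1 - c := sub_pos.2 (by exact_mod_cast hc)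
  have hle : ∀ᶠ x in 𝓝 a, dist (g x) (g a) ≤ dist (h x) (h a) / (1 - c) := by
    filter_upwards [hgs, hfg] with x hxs hx
    rw [le_div_iff₀ hc', mul_comm, dist_eq_norm, dist_eq_norm, ← hx, ← hfg.self_of_nhds]
    exact hf.one_sub_mul_norm_sub_le hxs hgs.self_of_nhds
  rw [ContinuousAt, tendsto_iff_dist_tendsto_zero]
  refine squeeze_zero' (Eventually.of_forall fun _ => dist_nonneg) hle ?_
  simpa using (tendsto_iff_dist_tendsto_zero.1 hh).div_const (1 - (c : ℝ))

theorem ApproximatesLinearOn.differentiableAt_of_comp_eq [CompleteSpace E] {G : Type*}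
    [NormedAddCommGroup G] [NormedSpace 𝕜 G] {g h : G → E} {a : G}
    (hf : ApproximatesLinearOn f (ContinuousLinearMap.id 𝕜 E) s c) (hc : c < 1)
    (hs : s ∈ 𝓝 (g a)) (hgs : ∀ᶠ x in 𝓝 a, g x ∈ s) (hfg : ∀ᶠ x in 𝓝 a, f (g x) = h x)
    (hfd : DifferentiableAt 𝕜 f (g a)) (hh : DifferentiableAt 𝕜 h a) :
    DifferentiableAt 𝕜 g a := by
  set D := fderiv 𝕜 f (g a)
  have hD : ‖1 - D‖ < 1 := by
    have := norm_fderiv_le_of_lipschitzOn 𝕜 hs (approximatesLinearOn_iff_lipschitzOnWith.1 hf)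
    rw [(hfd.hasFDerivAt.sub (ContinuousLinearMap.id 𝕜 E).hasFDerivAt).fderiv,
      norm_sub_rev] at this
    exact this.trans_lt (by exact_mod_cast hc)
  have hunit : IsUnit D := by simpa using isUnit_one_sub_of_norm_lt_one hD
  exact (hfd.hasFDerivAt.of_comp_of_leftInverse (f'symm := Ring.inverse D)
    (hf.continuousAt_of_comp_eq hc hgs hfg hh.continuousAt) hh.hasFDerivAt hfg
    (DFunLike.congr_fun (Ring.inverse_mul_cancel _ hunit))).differentiableAt

end PerturbationOfIdentity

section CauchyEstimates

variable {E F : Type*} [NormedAddCommGroup E] [NormedSpace ℂ E]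
  [NormedAddCommGroup F] [NormedSpace ℂ F]

theorem norm_deriv_le_of_forall_mem_ball_norm_le {f : ℂ → F} {c : ℂ} {R C : ℝ} (hR : 0 < R)
    (hf : DifferentiableOn ℂ f (ball c R)) (hC : ∀ z ∈ ball c R, ‖f z‖ ≤ C) :
    ‖deriv f c‖ ≤ C / R := by
  -- Cauchy's estimate on every smaller closed disc, then let its radius tend to `R`.
  have hsmall : ∀ᶠ ρ in 𝓝[<] R, ‖deriv f c‖ ≤ C / ρ := by
    filter_upwards [Ioo_mem_nhdsLT hR] with ρ hρ
    exact Complex.norm_deriv_le_of_forall_mem_sphere_norm_le hρ.1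
      (hf.diffContOnCl_ball (closedBall_subset_ball hρ.2))
      fun z hz => hC z (sphere_subset_closedBall.trans (closedBall_subset_ball hρ.2) hz)
  exact ge_of_tendsto ((continuousAt_const.div continuousAt_id hR.ne').tendsto.mono_left
    nhdsWithin_le_nhds) hsmall

theorem norm_fderiv_le_of_forall_mem_ball_norm_le {f : E → F} {x : E} {r C : ℝ} (hr : 0 < r)
    (hf : DifferentiableOn ℂ f (ball x r)) (hC : ∀ y ∈ ball x r, ‖f y‖ ≤ C) :
    ‖fderiv ℂ f x‖ ≤ C / r := by
  have hC0 : 0 ≤ C := (norm_nonneg _).trans (hC x (mem_ball_self hr))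
  refine ContinuousLinearMap.opNorm_le_bound _ (by positivity) fun v => ?_
  rcases eq_or_ne v 0 with rfl | hv
  · simp
  have hv' : 0 < ‖v‖ := norm_pos_iff.2 hv
  set line : ℂ → E := fun t => x + t • v
  have hline : MapsTo line (ball 0 (r / ‖v‖)) (ball x r) := by
    intro t ht
    rw [mem_ball_zero_iff, lt_div_iff₀ hv'] at ht
    simpa [line, norm_smul] using ht
  have hderiv : HasDerivAt (f ∘ line) (fderiv ℂ f x v) 0 := by
    have hfx : HasFDerivAt f (fderiv ℂ f x) (line 0) := by
      simpa [line] using (hf.differentiableAt (isOpen_ball.mem_nhds (mem_ball_self hr))).hasFDerivAt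
    exact hfx.comp_hasDerivAt 0
      (by simpa only [one_smul, id] using ((hasDerivAt_id (0 : ℂ)).smul_const v).const_add x)
  have hdisc := norm_deriv_le_of_forall_mem_ball_norm_le (div_pos hr hv')
    (hf.comp (by fun_prop) hline) fun t ht => hC _ (hline ht)
  rw [hderiv.deriv] at hdisc
  calc ‖fderiv ℂ f x v‖ ≤ C / (r / ‖v‖) := hdisc
    _ = C / r * ‖v‖ := by field_simp

theorem norm_sub_le_of_mem_closedBall_of_forall_mem_ball_norm_le {f : E → F} {z : E}
    {ρ δ C : ℝ} (hρ : ρ < δ) (hf : DifferentiableOn ℂ f (ball z δ))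
    (hC : ∀ y ∈ ball z δ, ‖f y‖ ≤ C) {x y : E} (hx : x ∈ closedBall z ρ)
    (hy : y ∈ closedBall z ρ) : ‖f x - f y‖ ≤ C / (δ - ρ) * ‖x - y‖ := by
  have hball : ∀ w ∈ closedBall z ρ, ball w (δ - ρ) ⊆ ball z δ := fun w hw =>
    ball_subset_ball' (by linarith [mem_closedBall.1 hw])
  refine (convex_closedBall z ρ).norm_image_sub_le_of_norm_fderiv_le (𝕜 := ℂ)
    (fun w hw => ?_) (fun w hw => ?_) hy hx
  · exact hf.differentiableAt (isOpen_ball.mem_nhds (hball w hw (mem_ball_self (by linarith))))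
  · exact norm_fderiv_le_of_forall_mem_ball_norm_le (by linarith) (hf.mono (hball w hw))
      fun v hv => hC v (hball w hw hv)

end CauchyEstimates

section NearIdentity

variable {E : Type*} [NormedAddCommGroup E] [NormedSpace ℂ E] {U : Set E} {z : E} {ε δ : ℝ}

theorem approximatesLinearOn_id_closedBall {f : E → E} {ρ : ℝ} (hρ : ρ < δ)
    (hzU : ball z δ ⊆ U) (hf : DifferentiableOn ℂ f U) (hfε : ∀ x ∈ U, ‖f x - x‖ ≤ ε) :
    ApproximatesLinearOn f (ContinuousLinearMap.id ℂ E) (closedBall z ρ)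
      (Real.toNNReal (ε / (δ - ρ))) := by
  intro x hx y hy
  have hxy := norm_sub_le_of_mem_closedBall_of_forall_mem_ball_norm_le hρ
    ((hf.sub differentiableOn_id).mono hzU) (fun x hx => hfε x (hzU hx)) hx hy
  rw [ContinuousLinearMap.id_apply, sub_sub_sub_comm]
  exact hxy.trans (by gcongr; exact Real.le_coe_toNNReal _)

theorem norm_sub_le_of_apply_eq_comp_of_splitting {α β γ : E → E} {w : E} (hε : 0 < ε)
    (hεδ : ε < δ / 4) (hzU : ball z δ ⊆ U) (hα : ‖α z - z‖ ≤ ε) (hβ : DifferentiableOn ℂ β U)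
    (hβε : ∀ x ∈ U, ‖β x - x‖ ≤ ε) (hγ : DifferentiableOn ℂ γ U)
    (hγε : ∀ x ∈ U, ‖γ x - x‖ ≤ ε) (hsplit : γ z - z = (β z - z) - (α z - z))
    (hw : w ∈ closedBall z (3 * ε)) (hβw : β w = γ (α z)) :
    ‖w - z‖ ≤ 16 * ε ^ 2 / δ := by
  have hz : z ∈ closedBall z (3 * ε) := mem_closedBall_self (by positivity)
  have hαz : α z ∈ closedBall z (3 * ε) := mem_closedBall_iff_norm.2 (by linarith)
  have hγL := approximatesLinearOn_id_closedBall (ρ := 3 * ε) (by linarith) hzU hγ hγε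
    (α z) hαz z hz
  have hβL := approximatesLinearOn_id_closedBall (ρ := 3 * ε) (by linarith) hzU hβ hβε w hw z hz
  have hL0 : 0 ≤ ε / (δ - 3 * ε) := div_nonneg hε.le (by linarith)
  simp only [ContinuousLinearMap.id_apply, Real.coe_toNNReal _ hL0] at hγL hβL
  set L := ε / (δ - 3 * ε)
  have hL4 : L ≤ 4 * ε / δ := by
    rw [div_le_div_iff₀ (by linarith) (by linarith)]
    nlinarith
  have hwz : w - z = (γ (α z) - γ z - (α z - z)) - (β w - β z - (w - z)) := by
    rw [sub_eq_iff_eq_add] at hsplit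
    rw [hβw, hsplit]
    abel
  have hw3 : ‖w - z‖ ≤ 3 * ε := mem_closedBall_iff_norm.1 hw
  calc ‖w - z‖ = ‖(γ (α z) - γ z - (α z - z)) - (β w - β z - (w - z))‖ := by rw [← hwz]
    _ ≤ L * ‖α z - z‖ + L * ‖w - z‖ := (norm_sub_le _ _).trans (add_le_add hγL hβL)
    _ ≤ 4 * ε * L := by nlinarith
    _ ≤ 4 * ε * (4 * ε / δ) := by gcongr
    _ = 16 * ε ^ 2 / δ := by ring

variable [CompleteSpace E]

theorem exists_mem_closedBall_apply_eq_of_near_id {β : E → E} {y : E} (hε : 0 < ε)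
    (hεδ : ε < δ / 4) (hzU : ball z δ ⊆ U) (hβ : DifferentiableOn ℂ β U)
    (hβε : ∀ x ∈ U, ‖β x - x‖ ≤ ε) (hy : ‖y - z‖ ≤ 2 * ε) :
    ∃ w ∈ closedBall z (3 * ε), β w = y := by
  refine (approximatesLinearOn_id_closedBall (by linarith) hzU hβ hβε).exists_mem_closedBall_eq
    (Real.toNNReal_lt_one.2 ((div_lt_one (by linarith)).2 (by linarith))) (by positivity)
    fun x hx => ?_
  linarith [hβε x (hzU (closedBall_subset_ball (by linarith) hx))]

theorem differentiableAt_of_apply_eq_of_near_id {β g ψ : E → E} (hε : 0 < ε)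
    (hεδ : ε < δ / 4) (hzU : ball z δ ⊆ U) (hβ : DifferentiableOn ℂ β U)
    (hβε : ∀ x ∈ U, ‖β x - x‖ ≤ ε)
    (hg : ∀ᶠ x in 𝓝 z, g x ∈ closedBall x (3 * ε) ∧ β (g x) = ψ x)
    (hψ : DifferentiableAt ℂ ψ z) : DifferentiableAt ℂ g z := by
  obtain ⟨r, hr, hrδ⟩ : ∃ r, 0 < r ∧ 3 * ε + r < δ - ε :=
    ⟨(δ - 4 * ε) / 2, by linarith, by linarith⟩
  have hgz : g z ∈ ball z (3 * ε + r) :=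
    mem_ball.2 ((mem_closedBall.1 hg.self_of_nhds.1).trans_lt (by linarith))
  have hgs : ∀ᶠ x in 𝓝 z, g x ∈ closedBall z (3 * ε + r) := by
    filter_upwards [hg, ball_mem_nhds z hr] with x hx hxz
    exact mem_closedBall.2 ((dist_triangle _ x _).trans
      (add_le_add (mem_closedBall.1 hx.1) (mem_ball.1 hxz).le))
  refine (approximatesLinearOn_id_closedBall (ρ := 3 * ε + r) (by linarith) hzU hβ hβε)
    |>.differentiableAt_of_comp_eq ?_ (closedBall_mem_nhds_of_mem hgz) hgs
      (hg.mono fun x hx => hx.2) ?_ hψ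
  · exact Real.toNNReal_lt_one.2 ((div_lt_one (by linarith)).2 (by linarith))
  · exact hβ.differentiableAt (mem_of_superset (isOpen_ball.mem_nhds
      (ball_subset_ball (by linarith) hgz)) hzU)

end NearIdentity

theorem ball_subset_nbhd_s8 {n : ℕ} {V : Set (EuclideanSpace ℂ (Fin n))} {δ : ℝ} {z}
    (hz : z ∈ V) : ball z δ ⊆ nbhd V δ :=
  fun _ hw => ⟨z, hz, by rwa [mem_ball', dist_eq_norm] at hw⟩

theorem isOpen_nbhd {n : ℕ} (V : Set (EuclideanSpace ℂ (Fin n))) (δ : ℝ) :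
    IsOpen (nbhd V δ) :=
  isOpen_iff_mem_nhds.2 fun _ ⟨_, hz, hx⟩ =>
    mem_of_superset (isOpen_ball.mem_nhds (by rwa [mem_ball', dist_eq_norm])) (ball_subset_nbhd_s8 hz)

theorem near_identity_composition_quadratic_general (n : ℕ) :
    ∃ M₂ : ℝ, 1 ≤ M₂ ∧
      ∀ (V : Set (EuclideanSpace ℂ (Fin n))) (ε δ : ℝ)
        (α β γ : EuclideanSpace ℂ (Fin n) → EuclideanSpace ℂ (Fin n)),
        V.Nonempty → IsOpen V → 0 < ε → ε < δ / 4 →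
        Set.InjOn α (nbhd V δ) → DifferentiableOn ℂ α (nbhd V δ) →
        Set.InjOn β (nbhd V δ) → DifferentiableOn ℂ β (nbhd V δ) →
        Set.InjOn γ (nbhd V δ) → DifferentiableOn ℂ γ (nbhd V δ) →
        (∀ z ∈ nbhd V δ, ‖α z - z‖ < ε) →
        (∀ z ∈ nbhd V δ, ‖β z - z‖ < ε) →
        (∀ z ∈ nbhd V δ, ‖γ z - z‖ < ε) →
        (∀ z ∈ V, γ z - z = (β z - z) - (α z - z)) →
        ∃ γt : EuclideanSpace ℂ (Fin n) → EuclideanSpace ℂ (Fin n),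
          (∀ z ∈ V, α z ∈ nbhd V δ ∧ γt z ∈ nbhd V δ ∧ β (γt z) = γ (α z)) ∧
          Set.InjOn γt V ∧ DifferentiableOn ℂ γt V ∧
          ∀ z ∈ V, ‖γt z - z‖ ≤ M₂ * ε ^ 2 / δ := by
  refine ⟨16, by norm_num, fun V ε δ α β γ _ hV hε hεδ hαi hαd _ hβd hγi hγd hα hβ hγ hsplit =>
    ?_⟩
  have hVU : ∀ z ∈ V, z ∈ nbhd V δ := fun z hz => ball_subset_nbhd_s8 hz (mem_ball_self (by linarith))
  have hαU : ∀ z ∈ V, α z ∈ nbhd V δ := fun z hz =>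
    ball_subset_nbhd_s8 hz (mem_ball_iff_norm.2 ((hα z (hVU z hz)).trans (by linarith)))
  have hψ : ∀ z ∈ V, ‖γ (α z) - z‖ ≤ 2 * ε := fun z hz =>
    (norm_sub_le_norm_sub_add_norm_sub _ (α z) _).trans
      (by linarith [hγ _ (hαU z hz), hα z (hVU z hz)])
  have hβ' := fun x hx => (hβ x hx).le
  choose! γt hγt_mem hγt_eq using fun z hz => exists_mem_closedBall_apply_eq_of_near_id hε hεδ
    (ball_subset_nbhd_s8 hz) hβd hβ' (hψ z hz)
  refine ⟨γt, fun z hz => ⟨hαU z hz, ball_subset_nbhd_s8 hz (closedBall_subset_ball (by linarith)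
    (hγt_mem z hz)), hγt_eq z hz⟩, fun z₁ h₁ z₂ h₂ he => ?_, fun z hz => ?_, fun z hz => ?_⟩
  · exact hαi (hVU z₁ h₁) (hVU z₂ h₂) (hγi (hαU z₁ h₁) (hαU z₂ h₂)
      (by rw [← hγt_eq z₁ h₁, ← hγt_eq z₂ h₂, he]))
  · have hU := isOpen_nbhd V δ
    refine (differentiableAt_of_apply_eq_of_near_id hε hεδ (ball_subset_nbhd_s8 hz) hβd hβ' ?_
      ((hγd.differentiableAt (hU.mem_nhds (hαU z hz))).comp z
        (hαd.differentiableAt (hU.mem_nhds (hVU z hz))))).differentiableWithinAt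
    filter_upwards [hV.mem_nhds hz] with x hx using ⟨hγt_mem x hx, hγt_eq x hx⟩
  · exact norm_sub_le_of_apply_eq_comp_of_splitting hε hεδ (ball_subset_nbhd_s8 hz)
      (hα z (hVU z hz)).le hβd hβ' hγd (fun x hx => (hγ x hx).le) (hsplit z hz) (hγt_mem z hz)
      (hγt_eq z hz)

/-- Quadratic estimate in the splitting iteration: under the hypotheses of the
near-identity composition lemma, if additionally `c = b - a` on `V`, then the map
`γ̃ = β⁻¹ ∘ γ ∘ α = Id + c̃` satisfies `‖c̃‖_V ≤ M₂ ε²/δ` with `M₂ ≥ 1` depending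
only on `n`. -/
theorem near_identity_composition_quadratic (n : ℕ) (hn : 1 ≤ n) :
    ∃ M₂ : ℝ, 1 ≤ M₂ ∧
      ∀ (V : Set (EuclideanSpace ℂ (Fin n))) (ε δ : ℝ)
        (α β γ : EuclideanSpace ℂ (Fin n) → EuclideanSpace ℂ (Fin n)),
        V.Nonempty → IsOpen V → 0 < ε → ε < δ / 4 →
        Set.InjOn α (nbhd V δ) → DifferentiableOn ℂ α (nbhd V δ) →
        Set.InjOn β (nbhd V δ) → DifferentiableOn ℂ β (nbhd V δ) →
        Set.InjOn γ (nbhd V δ) → DifferentiableOn ℂ γ (nbhd V δ) →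
        (∀ z ∈ nbhd V δ, ‖α z - z‖ < ε) →
        (∀ z ∈ nbhd V δ, ‖β z - z‖ < ε) →
        (∀ z ∈ nbhd V δ, ‖γ z - z‖ < ε) →
        (∀ z ∈ V, γ z - z = (β z - z) - (α z - z)) →
        ∃ γt : EuclideanSpace ℂ (Fin n) → EuclideanSpace ℂ (Fin n),
          (∀ z ∈ V, α z ∈ nbhd V δ ∧ γt z ∈ nbhd V δ ∧ β (γt z) = γ (α z)) ∧
          Set.InjOn γt V ∧ DifferentiableOn ℂ γt V ∧
          ∀ z ∈ V, ‖γt z - z‖ ≤ M₂ * ε ^ 2 / δ :=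
  near_identity_composition_quadratic_general n
end

section
/- Let D be a nonempty open subset of ℂⁿ, let 0 < ε < δ, and let Φ : D(δ) → ℂⁿ be an injective holomorphic map with sup_{z ∈ D(δ)} ‖Φ(z) − z‖ < ε. Then for every point x ∈ D(δ − ε), the number of preimages of x under Φ restricted to the open ball B(x, ε) is exactly one; in particular Φ⁻¹ : D(δ − ε) → D(δ) is well defined and satisfies ‖Φ⁻¹(x) − x‖ < ε for all x ∈ D(δ − ε). -/
open Set Metric

/-!
Pick `p ∈ D` with `‖p - x‖ < δ - ε`. The preimages of `x` are the fixed points of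
`g z = x + z - Φ z`, which maps `B(p, δ) ⊆ D(δ)` holomorphically into the strictly smaller ball
`B̄(p, ‖p - x‖ + ε)`. Such a map has a fixed point (Earle–Hamilton), and injectivity of `Φ` makes
it unique.

Earle–Hamilton: since `g` lands in a strictly smaller ball, for some `s > 1` the dilations
`y ↦ g u + s (g y - g u)` still map `B(p, δ)` into itself. Precomposing a holomorphic
`f : B(p, δ) → 𝔻` with them shows, by induction on `k`, that `f ∘ g^[k]` has derivative
`O(s⁻ᵏ)` uniformly in `f`; testing against linear functionals turns this into
`‖D(g^[k])‖ = O(s⁻ᵏ)` on the smaller ball, so the orbit of `p` is Cauchy.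
-/

theorem exists_fixedPoint_of_dist_iterate_le_geometric {X : Type*} [MetricSpace X]
    [CompleteSpace X] {g : X → X} {K : Set X} (hK : IsClosed K) (hgK : MapsTo g K K)
    (hg : ContinuousOn g K) {x : X} (hx : x ∈ K) {C q : ℝ} (hq : q < 1)
    (hdist : ∀ k, dist (g^[k] x) (g^[k + 1] x) ≤ C * q ^ k) : ∃ z ∈ K, g z = z := by
  obtain ⟨z, hlim⟩ := cauchySeq_tendsto_of_complete (cauchySeq_of_le_geometric q C hq hdist)
  have hzK : z ∈ K := hK.mem_of_tendsto hlim (Filter.Eventually.of_forall (hgK.iterate · hx))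
  refine ⟨z, hzK, tendsto_nhds_unique ?_ (hlim.comp (Filter.tendsto_add_atTop_nat 1))⟩
  have := ((hg z hzK).tendsto.comp (tendsto_nhdsWithin_iff.2
    ⟨hlim, Filter.Eventually.of_forall (hgK.iterate · hx)⟩))
  simpa only [Function.comp_def, ← Function.iterate_succ_apply'] using this

section

variable {E F : Type*} [NormedAddCommGroup E] [NormedSpace ℂ E]
  [NormedAddCommGroup F] [NormedSpace ℂ F]

theorem fderiv_comp_dilation_apply {f : E → F} {g : E → E} {u : E}
    (hf : DifferentiableAt ℂ f (g u)) (hg : DifferentiableAt ℂ g u) (s : ℂ) (w : E) :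
    fderiv ℂ (fun z => f (g u + s • (g z - g u))) u w = s • fderiv ℂ f (g u) (fderiv ℂ g u w) := by
  have hdil : HasFDerivAt (fun z => g u + s • (g z - g u)) (s • fderiv ℂ g u) u :=
    ((hg.hasFDerivAt.sub_const (g u)).const_smul s).const_add (g u)
  have hf' : HasFDerivAt f (fderiv ℂ f (g u)) (g u + s • (g u - g u)) := by
    simpa using hf.hasFDerivAt
  have hcomp := (hf'.comp u hdil).fderiv
  rw [Function.comp_def] at hcomp
  rw [hcomp]
  simp

theorem norm_fderiv_apply_fderiv_iterate_le {U : Set E} (hU : IsOpen U) {g : E → E}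
    (hg : DifferentiableOn ℂ g U) {s : ℝ} (hs : 0 < s)
    (hdil : ∀ z ∈ U, ∀ u ∈ U, g u + (s : ℂ) • (g z - g u) ∈ U)
    {z : E} {R : ℝ} (hR : 0 < R) (hzR : ball z R ⊆ U) (v : E) (k : ℕ)
    {f : E → ℂ} (hf : DifferentiableOn ℂ f U) (hfU : MapsTo f U (ball 0 1)) :
    ‖fderiv ℂ f (g^[k] z) (fderiv ℂ g^[k] z v)‖ ≤ 2 * ‖v‖ / (R * s ^ k) := by
  have hgU : MapsTo g U U := fun u hu => by simpa using hdil u hu u hu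
  have hz : z ∈ U := hzR (mem_ball_self hR)
  induction k generalizing f with
  | zero =>
    have hmaps : MapsTo f (ball z R) (closedBall (f z) 2) := fun y hy => by
      have h1 := mem_ball_zero_iff.1 (hfU (hzR hy))
      have h2 := mem_ball_zero_iff.1 (hfU hz)
      rw [mem_closedBall, dist_eq_norm]
      linarith [norm_sub_le (f y) (f z)]
    have hcauchy := Complex.norm_fderiv_le_div_of_mapsTo_ball (hf.mono hzR) hmaps hR
    rw [Function.iterate_zero, id, fderiv_id, ContinuousLinearMap.id_apply, pow_zero, mul_one]
    calc ‖fderiv ℂ f z v‖ ≤ 2 / R * ‖v‖ := (fderiv ℂ f z).le_of_opNorm_le hcauchy v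
      _ = 2 * ‖v‖ / R := by ring
  | succ k ih =>
    set u := g^[k] z
    have hu : u ∈ U := hgU.iterate k hz
    have hdiff : ∀ y ∈ U, DifferentiableAt ℂ g y := fun y hy =>
      hg.differentiableAt (hU.mem_nhds hy)
    have hfφ : DifferentiableOn ℂ (fun y => f (g u + (s : ℂ) • (g y - g u))) U :=
      hf.comp (((hg.sub_const _).const_smul _).const_add _) fun y hy => hdil y hy u hu
    have hφU : MapsTo (fun y => f (g u + (s : ℂ) • (g y - g u))) U (ball 0 1) :=
      fun y hy => hfU (hdil y hy u hu)
    have hchain : fderiv ℂ g^[k + 1] z v = fderiv ℂ g u (fderiv ℂ g^[k] z v) := by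
      rw [Function.iterate_succ', fderiv_comp z (hdiff u hu)
        ((hg.iterate hgU k).differentiableAt (hU.mem_nhds hz))]
      rfl
    have key := ih hfφ hφU
    rw [fderiv_comp_dilation_apply (hf.differentiableAt (hU.mem_nhds (hgU hu))) (hdiff u hu),
      norm_smul, Complex.norm_of_nonneg hs.le] at key
    rw [Function.iterate_succ_apply', hchain, pow_succ, ← mul_assoc, ← div_div,
      le_div_iff₀ hs, mul_comm]
    exact key

theorem norm_fderiv_iterate_apply_le {p : E} {δ : ℝ} {g : E → E}
    (hg : DifferentiableOn ℂ g (ball p δ)) {s : ℝ} (hs : 0 < s)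
    (hdil : ∀ z ∈ ball p δ, ∀ u ∈ ball p δ, g u + (s : ℂ) • (g z - g u) ∈ ball p δ)
    {z : E} (hz : z ∈ ball p δ) (k : ℕ) (v : E) :
    ‖fderiv ℂ g^[k] z v‖ ≤ 2 * δ * ‖v‖ / ((δ - dist z p) * s ^ k) := by
  have hδ : 0 < δ := pos_of_mem_ball hz
  set w := fderiv ℂ g^[k] z v
  obtain ⟨ℓ, hℓ, hℓw⟩ := exists_dual_vector'' ℂ w
  set L : StrongDual ℂ E := (δ : ℂ)⁻¹ • ℓ
  have hL : ‖L‖ ≤ δ⁻¹ := by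
    calc ‖L‖ = δ⁻¹ * ‖ℓ‖ := by
          rw [norm_smul, norm_inv, Complex.norm_of_nonneg hδ.le]
      _ ≤ δ⁻¹ := mul_le_of_le_one_right (inv_nonneg.2 hδ.le) hℓ
  have hLU : MapsTo (fun y => L y - L p) (ball p δ) (ball 0 1) := fun y hy => by
    rw [mem_ball_zero_iff]
    change ‖L y - L p‖ < 1
    rw [← map_sub]
    calc ‖L (y - p)‖ ≤ δ⁻¹ * ‖y - p‖ := L.le_of_opNorm_le hL _
      _ < δ⁻¹ * δ := by gcongr; exact mem_ball_iff_norm.1 hy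
      _ = 1 := inv_mul_cancel₀ hδ.ne'
  have hLd : fderiv ℂ (fun y => L y - L p) (g^[k] z) = L :=
    (L.hasFDerivAt.sub_const (L p)).fderiv
  have key := norm_fderiv_apply_fderiv_iterate_le isOpen_ball hg hs hdil
    (sub_pos.2 (mem_ball.1 hz)) (ball_subset_ball' (by linarith)) v k
    (L.differentiable.differentiableOn.sub_const _) hLU
  rw [hLd] at key
  have hLw : ‖L w‖ = δ⁻¹ * ‖w‖ := by
    rw [FunLike.coe_smul, Pi.smul_apply, hℓw, smul_eq_mul, norm_mul, norm_inv,
      Complex.norm_of_nonneg hδ.le, RCLike.norm_ofReal, abs_norm]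
  rw [hLw, inv_mul_le_iff₀ hδ, ← mul_div_assoc, ← mul_assoc, mul_comm δ 2] at key
  exact key

theorem norm_iterate_sub_le {p : E} {δ r : ℝ} (hr : r < δ) {g : E → E}
    (hg : DifferentiableOn ℂ g (ball p δ)) {s : ℝ} (hs : 0 < s)
    (hdil : ∀ z ∈ ball p δ, ∀ u ∈ ball p δ, g u + (s : ℂ) • (g z - g u) ∈ ball p δ)
    {x y : E} (hx : x ∈ closedBall p r) (hy : y ∈ closedBall p r) (k : ℕ) :
    ‖g^[k] y - g^[k] x‖ ≤ 2 * δ / ((δ - r) * s ^ k) * ‖y - x‖ := by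
  have hball : closedBall p r ⊆ ball p δ := closedBall_subset_ball hr
  have hgU : MapsTo g (ball p δ) (ball p δ) := fun u hu => by simpa using hdil u hu u hu
  refine (convex_closedBall p r).norm_image_sub_le_of_norm_fderiv_le
    (fun z hz => ((hg.iterate hgU k).differentiableAt (isOpen_ball.mem_nhds (hball hz))))
    (fun z hz => ?_) hx hy
  have hzr : dist z p ≤ r := mem_closedBall.1 hz
  have hδ : 0 < δ := pos_of_mem_ball (hball hz)
  have hδr : 0 < δ - r := sub_pos.2 hr
  refine ContinuousLinearMap.opNorm_le_bound _ (by positivity) fun v => ?_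
  calc ‖fderiv ℂ g^[k] z v‖ ≤ 2 * δ * ‖v‖ / ((δ - dist z p) * s ^ k) :=
        norm_fderiv_iterate_apply_le hg hs hdil (hball hz) k v
    _ ≤ 2 * δ * ‖v‖ / ((δ - r) * s ^ k) := by gcongr
    _ = 2 * δ / ((δ - r) * s ^ k) * ‖v‖ := by ring

theorem exists_fixedPoint_of_mapsTo_closedBall [CompleteSpace E] {p : E} {r δ : ℝ}
    (hr₀ : 0 ≤ r) (hr : r < δ) {g : E → E} (hg : DifferentiableOn ℂ g (ball p δ))
    (hmaps : MapsTo g (ball p δ) (closedBall p r)) : ∃ z ∈ closedBall p r, g z = z := by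
  have hδ : 0 < δ := hr₀.trans_lt hr
  have hball : closedBall p r ⊆ ball p δ := closedBall_subset_ball hr
  set s : ℝ := 2 * δ / (δ + r)
  have hs : 1 < s := by rw [one_lt_div (by positivity)]; linarith
  have hsr : (2 * s - 1) * r < δ := by
    have hs' : 2 * s - 1 = (3 * δ - r) / (δ + r) := by simp only [s]; field_simp; ring
    rw [hs', div_mul_eq_mul_div, div_lt_iff₀ (by positivity)]
    nlinarith [sq_pos_of_pos (sub_pos.2 hr)]
  have hdil : ∀ z ∈ ball p δ, ∀ u ∈ ball p δ, g u + (s : ℂ) • (g z - g u) ∈ ball p δ := by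
    intro z hz u hu
    have hgz := mem_closedBall_iff_norm.1 (hmaps hz)
    have hgu := mem_closedBall_iff_norm.1 (hmaps hu)
    rw [mem_ball_iff_norm]
    calc ‖g u + (s : ℂ) • (g z - g u) - p‖
        = ‖((1 - s : ℝ) : ℂ) • (g u - p) + (s : ℂ) • (g z - p)‖ := by
          congr 1; push_cast; module
      _ ≤ (s - 1) * r + s * r := by
          refine (norm_add_le _ _).trans (add_le_add ?_ ?_) <;>
            rw [norm_smul, Complex.norm_real, Real.norm_eq_abs]
          · rw [abs_of_nonpos (by linarith)]; nlinarith
          · rw [abs_of_pos (by linarith)]; nlinarith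
      _ < δ := by linarith
  have hp : p ∈ closedBall p r := mem_closedBall_self hr₀
  refine exists_fixedPoint_of_dist_iterate_le_geometric isClosed_closedBall
    (fun u hu => hmaps (hball hu)) (hg.continuousOn.mono hball) hp
    (C := 2 * δ / (δ - r) * ‖g p - p‖) (inv_lt_one_of_one_lt₀ hs) fun k => ?_
  rw [dist_comm, dist_eq_norm, Function.iterate_succ_apply]
  calc ‖g^[k] (g p) - g^[k] p‖ ≤ 2 * δ / ((δ - r) * s ^ k) * ‖g p - p‖ :=
        norm_iterate_sub_le hr hg (by linarith) hdil hp (hmaps (hball hp)) k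
    _ = 2 * δ / (δ - r) * ‖g p - p‖ * s⁻¹ ^ k := by
        rw [inv_pow]; field_simp

end

theorem near_identity_unique_preimage_general (n : ℕ) (D : Set (EuclideanSpace ℂ (Fin n)))
    (ε δ : ℝ) (hε : 0 < ε)
    (Φ : EuclideanSpace ℂ (Fin n) → EuclideanSpace ℂ (Fin n))
    (hinj : Set.InjOn Φ (nbhd D δ)) (hholo : DifferentiableOn ℂ Φ (nbhd D δ))
    (hnear : ∀ z ∈ nbhd D δ, ‖Φ z - z‖ < ε) :
    ∀ x ∈ nbhd D (δ - ε), ∃ z, z ∈ nbhd D δ ∧ Φ z = x ∧ ‖z - x‖ < ε ∧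
      ∀ w ∈ nbhd D δ, Φ w = x → w = z := by
  rintro x ⟨p, hpD, hpx⟩
  have hball : ball p δ ⊆ nbhd D δ := fun z hz => ⟨p, hpD, by rwa [norm_sub_rev, ← dist_eq_norm]⟩
  have hmaps : MapsTo (fun z => x + z - Φ z) (ball p δ) (closedBall p (‖p - x‖ + ε)) :=
    fun z hz => by
      rw [mem_closedBall_iff_norm]
      calc ‖x + z - Φ z - p‖ = ‖(z - Φ z) + (x - p)‖ := by abel_nf
        _ ≤ ‖z - Φ z‖ + ‖x - p‖ := norm_add_le _ _
        _ = ‖Φ z - z‖ + ‖p - x‖ := by rw [norm_sub_rev z, norm_sub_rev x]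
        _ ≤ ‖p - x‖ + ε := by linarith [hnear z (hball hz)]
  obtain ⟨z, hz, hfix⟩ := exists_fixedPoint_of_mapsTo_closedBall (g := fun z => x + z - Φ z)
    (by positivity) (by linarith)
    (((differentiableOn_const x).add differentiableOn_id).sub (hholo.mono hball)) hmaps
  have hΦz : Φ z = x := by
    rw [sub_eq_iff_eq_add, add_comm z] at hfix
    exact (add_right_cancel hfix).symm
  have hzD : z ∈ nbhd D δ := hball (closedBall_subset_ball (by linarith) hz)
  refine ⟨z, hzD, hΦz, ?_, fun w hw hΦw => hinj hw hzD (hΦw.trans hΦz.symm)⟩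
  simpa [hΦz, norm_sub_rev] using hnear z hzD

/-- Near-identity injective holomorphic maps have a well defined near-identity
inverse: every `x ∈ D(δ-ε)` has exactly one preimage under `Φ`, which lies in the
ball `B(x, ε)`; in particular `‖Φ⁻¹(x) - x‖ < ε`. -/
theorem near_identity_unique_preimage (n : ℕ) (D : Set (EuclideanSpace ℂ (Fin n)))
    (hD : D.Nonempty) (hDo : IsOpen D) (ε δ : ℝ) (hε : 0 < ε) (hεδ : ε < δ)
    (Φ : EuclideanSpace ℂ (Fin n) → EuclideanSpace ℂ (Fin n))
    (hinj : Set.InjOn Φ (nbhd D δ)) (hholo : DifferentiableOn ℂ Φ (nbhd D δ))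
    (hnear : ∀ z ∈ nbhd D δ, ‖Φ z - z‖ < ε) :
    ∀ x ∈ nbhd D (δ - ε), ∃ z, z ∈ nbhd D δ ∧ Φ z = x ∧ ‖z - x‖ < ε ∧
      ∀ w ∈ nbhd D δ, Φ w = x → w = z :=
  near_identity_unique_preimage_general n D ε δ hε Φ hinj hholo hnear
end

section
/- Let 𝒫 be a topological space and let M : 𝒫 → ℝ_{>0} be a function such that every point r ∈ 𝒫 has an open neighborhood V_r with M(q) ≤ M(r) for all q ∈ V_r (i.e., M is locally bounded above by its value at the base point). If 𝒫 is a metric space, then there exists a continuous function C : 𝒫 → ℝ_{>0} with C(r) ≥ M(r) for all r ∈ 𝒫. -/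
open Filter Topology

/- Glue the local constant bounds with a partition of unity: each `Set.Ici (f x)` is convex, so
the averaged bound still dominates `f`. -/
theorem exists_continuous_ge_of_isBoundedUnder_le_nhds {X : Type*} [TopologicalSpace X]
    [NormalSpace X] [ParacompactSpace X] (f : X → ℝ)
    (hf : ∀ x, IsBoundedUnder (· ≤ ·) (𝓝 x) f) : ∃ g : C(X, ℝ), ∀ x, f x ≤ g x :=
  exists_continuous_forall_mem_convex_of_local_const (fun x => convex_Ici (f x)) hf

/-- On a metric space, a positive function that is locally bounded above by its
value at each base point admits a continuous positive majorant. -/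
theorem continuous_majorant {P : Type*} [MetricSpace P] (M : P → ℝ)
    (hpos : ∀ r, 0 < M r)
    (hloc : ∀ r : P, ∃ V : Set P, IsOpen V ∧ r ∈ V ∧ ∀ q ∈ V, M q ≤ M r) :
    ∃ C : P → ℝ, Continuous C ∧ ∀ r, 0 < C r ∧ M r ≤ C r := by
  have hbdd : ∀ r, IsBoundedUnder (· ≤ ·) (𝓝 r) M := fun r =>
    let ⟨V, hVo, hrV, hle⟩ := hloc r
    ⟨M r, eventually_map.2 (eventually_of_mem (hVo.mem_nhds hrV) hle)⟩
  obtain ⟨C, hMC⟩ := exists_continuous_ge_of_isBoundedUnder_le_nhds M hbdd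
  exact ⟨C, C.continuous, fun r => ⟨(hpos r).trans_le (hMC r), hMC r⟩⟩
end
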